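/- Let A be an n×n real matrix whose rows a_1,…,a_n have unit Euclidean norm, and suppose A is tie-free. For each i let B_i = 2·Σ_{x ∈ S_i(A)} x ∈ ℝ^n. Then β(A) = 2^{-n} Σ_{i=1}^n ⟨a_i, B_i⟩, and consequently β(A) ≤ 2^{-n} Σ_{i=1}^n ‖B_i‖_2. -/

import Mathlib

open Finset

noncomputable section
open scoped Classical

/-- The sign `±1` associated to a Boolean. -/
def sgn (b : Bool) : ℝ := if b then 1 else -1

/-- The hypercube `{-1,1}^n` as a finite set of vectors in `ℝ^n`. -/
def cube (n : ℕ) : Finset (Fin n → ℝ) :=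
  (Finset.univ : Finset (Fin n → Bool)).image (fun ε i => sgn (ε i))

/-- `β(A) = 2^{-n} ∑_{x ∈ {-1,1}^n} ‖Ax‖_∞` (the `Pi` norm on `Fin n → ℝ` is the sup norm). -/
def badBeta {n : ℕ} (A : Matrix (Fin n) (Fin n) ℝ) : ℝ :=
  (2 ^ n : ℝ)⁻¹ * ∑ x ∈ cube n, ‖A.mulVec x‖

/-- The cell `S_i(A) = {x ∈ {-1,1}^n : ‖Ax‖_∞ = ⟨a_i, x⟩}`. -/
def cellS {n : ℕ} (A : Matrix (Fin n) (Fin n) ℝ) (i : Fin n) : Finset (Fin n → ℝ) :=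
  (cube n).filter (fun x => ‖A.mulVec x‖ = ∑ j, A i j * x j)

/-- `A` is tie-free: no two distinct rows attain the same absolute inner product with a
hypercube vertex. -/
def TieFree {n : ℕ} (A : Matrix (Fin n) (Fin n) ℝ) : Prop :=
  ∀ x ∈ cube n, ∀ i j : Fin n, i ≠ j →
    (∑ k, A i k * x k) ^ 2 ≠ (∑ k, A j k * x k) ^ 2

/-- Level-1 Fourier weight of `f : {-1,1}^n → ℝ`. -/
def W1 {n : ℕ} (f : (Fin n → ℝ) → ℝ) : ℝ :=
  ∑ i : Fin n, ((2 ^ n : ℝ)⁻¹ * ∑ x ∈ cube n, f x * x i) ^ 2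

/-!
For a vertex `x` with `Ax ≠ 0`, tie-freeness gives a unique row `i₀` with `|⟨a_{i₀}, x⟩| = ‖Ax‖_∞`,
so exactly one of `x`, `-x` lies in a cell, and in exactly one. Pairing `x` with `-x` therefore
shows that the cells, counted with multiplicity, carry half of `∑_x ‖Ax‖_∞`; on `S_i` the norm
is `⟨a_i, x⟩`, which sums to `⟨a_i, B_i⟩ / 2`. The inequality is then Cauchy–Schwarz.
-/

open Matrix

lemma card_filter_norm_eq_add_card_filter_norm_eq_neg {ι : Type*} [Fintype ι] {v : ι → ℝ}
    (hv : Function.Injective fun i => v i ^ 2) (h0 : v ≠ 0) :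
    #{i | ‖v‖ = v i} + #{i | ‖v‖ = -v i} = 1 := by
  have hpos : 0 < ‖v‖ := norm_pos_iff.mpr h0
  obtain ⟨i₀, hi₀⟩ : ∃ i, |v i| = ‖v‖ := by
    by_contra! hne
    have hlt : ∀ i, ‖v i‖ < ‖v‖ := fun i => (norm_le_pi_norm v i).lt_of_ne (hne i)
    exact lt_irrefl _ ((pi_norm_lt_iff hpos).mpr hlt)
  have hsq : ∀ i, ‖v‖ = v i ∨ ‖v‖ = -v i → i = i₀ := fun i hi => hv <| by
    simp only [← sq_abs (v i₀), hi₀]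
    rcases hi with h | h <;> simp [h]
  have hdisj : Disjoint ({i | ‖v‖ = v i} : Finset ι) ({i | ‖v‖ = -v i} : Finset ι) := by
    rw [disjoint_filter]
    intro i _ h h'
    linarith
  rw [← card_union_of_disjoint hdisj, ← filter_or, card_eq_one]
  refine ⟨i₀, eq_singleton_iff_unique_mem.mpr ⟨?_, fun i hi => hsq i (mem_filter.mp hi).2⟩⟩
  exact mem_filter.mpr ⟨mem_univ _, by rw [← hi₀]; exact abs_choice _⟩

lemma neg_mem_cube {n : ℕ} {x : Fin n → ℝ} (hx : x ∈ cube n) : -x ∈ cube n := by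
  obtain ⟨ε, -, rfl⟩ := mem_image.mp hx
  refine mem_image.mpr ⟨fun i => !ε i, mem_univ _, funext fun i => ?_⟩
  cases h : ε i <;> simp [sgn, h]

lemma sum_cube_comp_neg {n : ℕ} (f : (Fin n → ℝ) → ℝ) :
    ∑ x ∈ cube n, f (-x) = ∑ x ∈ cube n, f x :=
  sum_nbij' (-·) (-·) (fun _ => neg_mem_cube) (fun _ => neg_mem_cube) (fun x _ => neg_neg x)
    (fun x _ => neg_neg x) (fun _ _ => rfl)

section Cells

variable {n : ℕ} (A : Matrix (Fin n) (Fin n) ℝ)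

lemma cellS_eq_filter (i : Fin n) :
    cellS A i = (cube n).filter fun x => ‖A *ᵥ x‖ = (A *ᵥ x) i :=
  rfl

lemma sum_sum_cellS_norm_eq_sum_card_mul :
    ∑ i, ∑ x ∈ cellS A i, ‖A *ᵥ x‖ =
      ∑ x ∈ cube n, (#{i | ‖A *ᵥ x‖ = (A *ᵥ x) i} : ℝ) * ‖A *ᵥ x‖ := by
  simp only [cellS_eq_filter, sum_filter]
  rw [sum_comm]
  refine sum_congr rfl fun x _ => ?_
  rw [card_filter, Nat.cast_sum, sum_mul]
  exact sum_congr rfl fun i _ => by split_ifs <;> simp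

lemma sum_mul_two_mul_sum_cellS (i : Fin n) :
    ∑ j, A i j * (2 * ∑ x ∈ cellS A i, x j) = 2 * ∑ x ∈ cellS A i, ‖A *ᵥ x‖ := by
  simp only [mul_sum, mul_left_comm (A i _)]
  rw [sum_comm]
  refine sum_congr rfl fun x hx => ?_
  rw [(mem_filter.mp hx).2, mul_sum]

variable {A}

lemma TieFree.injective_sq_mulVec (htie : TieFree A) {x : Fin n → ℝ} (hx : x ∈ cube n) :
    Function.Injective fun i => (A *ᵥ x) i ^ 2 := fun i j hij => by
  by_contra hne
  exact htie x hx i j hne hij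

theorem TieFree.sum_cube_norm_mulVec_eq (htie : TieFree A) :
    ∑ x ∈ cube n, ‖A *ᵥ x‖ = 2 * ∑ i, ∑ x ∈ cellS A i, ‖A *ᵥ x‖ := by
  set m : (Fin n → ℝ) → ℝ := fun x => (#{i | ‖A *ᵥ x‖ = (A *ᵥ x) i} : ℝ) * ‖A *ᵥ x‖
  have hpair : ∀ x ∈ cube n, m x + m (-x) = ‖A *ᵥ x‖ := by
    intro x hx
    simp only [m, mulVec_neg, norm_neg, Pi.neg_apply, ← add_mul]
    by_cases h0 : A *ᵥ x = 0
    · simp [h0]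
    · rw [← Nat.cast_add, card_filter_norm_eq_add_card_filter_norm_eq_neg
        (htie.injective_sq_mulVec hx) h0, Nat.cast_one, one_mul]
  calc ∑ x ∈ cube n, ‖A *ᵥ x‖ = ∑ x ∈ cube n, (m x + m (-x)) := (sum_congr rfl hpair).symm
    _ = 2 * ∑ x ∈ cube n, m x := by rw [sum_add_distrib, sum_cube_comp_neg m, two_mul]
    _ = 2 * ∑ i, ∑ x ∈ cellS A i, ‖A *ᵥ x‖ := by rw [sum_sum_cellS_norm_eq_sum_card_mul]

end Cells

theorem stmt2 {n : ℕ} (A : Matrix (Fin n) (Fin n) ℝ)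
    (hrows : ∀ i, ∑ j, (A i j) ^ 2 = 1) (htie : TieFree A)
    (B : Fin n → Fin n → ℝ)
    (hB : ∀ i j, B i j = 2 * ∑ x ∈ cellS A i, x j) :
    badBeta A = (2 ^ n : ℝ)⁻¹ * ∑ i : Fin n, ∑ j : Fin n, A i j * B i j ∧
    badBeta A ≤ (2 ^ n : ℝ)⁻¹ * ∑ i : Fin n, Real.sqrt (∑ j : Fin n, (B i j) ^ 2) := by
  obtain rfl : B = fun i j => 2 * ∑ x ∈ cellS A i, x j := funext₂ hB
  have hbeta : badBeta A = (2 ^ n : ℝ)⁻¹ * ∑ i, ∑ j, A i j * (2 * ∑ x ∈ cellS A i, x j) := by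
    simp only [badBeta, sum_mul_two_mul_sum_cellS, ← mul_sum, htie.sum_cube_norm_mulVec_eq]
  refine ⟨hbeta, hbeta ▸ ?_⟩
  gcongr with i
  simpa [hrows i] using Real.sum_mul_le_sqrt_mul_sqrt univ (A i) _
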